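/- arXiv:2104.06318 — 4 statements merged into one kernel-verified Lean document; each statement's English description precedes it below -/
import Mathlib

section
/- Let V and W be finite-dimensional complex vector spaces, and let ⟨·,·⟩_V and ⟨·,·⟩_W be Hermitian sesquilinear forms on V and W respectively (possibly degenerate). Assume ⟨·,·⟩_V is indefinite, i.e., there exist u, v ∈ V with ⟨u,u⟩_V > 0 and ⟨v,v⟩_V < 0. If G : V → W is a ℂ-linear map such that ⟨Gx,Gx⟩_W = 0 for every x ∈ V with ⟨x,x⟩_V = 0, then there exists λ ∈ ℝ such that ⟨Gx,Gy⟩_W = λ·⟨x,y⟩_V for all x, y ∈ V. -/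
/-!
If `⟪x, x⟫ > 0 > ⟪y, y⟫`, choose a unit `c` with `Re (c ⟪x, y⟫) = 0` and `t > 0` with
`t² ⟪x, x⟫ + ⟪y, y⟫ = 0`; then `t x ± c y` are both null. Their images are null too, and the
parallelogram law turns this into `t² ⟪Gx, Gx⟫ + ⟪Gy, Gy⟫ = 0`, so `⟪Gx, Gx⟫ / ⟪x, x⟫` and
`⟪Gy, Gy⟫ / ⟪y, y⟫` agree. Hence the two quadratic forms are proportional on all non-null
vectors, trivially on null ones, and polarization upgrades this to the sesquilinear forms.
-/

open ComplexConjugate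

lemma Complex.exists_conj_mul_self_eq_one_and_re_mul_eq_zero (s : ℂ) :
    ∃ c : ℂ, conj c * c = 1 ∧ (c * s).re = 0 := by
  refine ⟨I * exp (-(s.arg * I)), ?_, ?_⟩
  · rw [conj_mul', norm_mul, norm_I, one_mul, ← neg_mul, ← ofReal_neg, norm_exp_ofReal_mul_I]
    norm_num
  · have hs : exp (-(s.arg * I)) * s = ‖s‖ := by
      rw [exp_neg, inv_mul_eq_iff_eq_mul₀ (exp_ne_zero _)]
      linear_combination -norm_mul_exp_arg_mul_I s
    rw [mul_assoc, hs, I_mul_re, ofReal_im, neg_zero]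

namespace LinearMap

variable {V : Type*} [AddCommGroup V] [Module ℂ V]

lemma apply_smul_self (B : V →ₗ⋆[ℂ] V →ₗ[ℂ] ℂ) (c : ℂ) (x : V) :
    B (c • x) (c • x) = conj c * c * B x x := by
  simp only [map_smulₛₗ, smul_apply, smul_eq_mul, RingHom.id_apply]
  ring

lemma apply_add_self_add_apply_sub_self (B : V →ₗ⋆[ℂ] V →ₗ[ℂ] ℂ) (x y : V) :
    B (x + y) (x + y) + B (x - y) (x - y) = 2 * B x x + 2 * B y y := by
  simp only [map_add, map_sub, add_apply, sub_apply]
  ring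

lemma polarization (B : V →ₗ⋆[ℂ] V →ₗ[ℂ] ℂ) (x y : V) :
    4 * B x y = B (x + y) (x + y) - B (x - y) (x - y)
      - Complex.I * B (x + Complex.I • y) (x + Complex.I • y)
      + Complex.I * B (x - Complex.I • y) (x - Complex.I • y) := by
  simp only [map_add, map_sub, map_smulₛₗ, add_apply, sub_apply, smul_apply,
    smul_eq_mul, RingHom.id_apply, Complex.conj_I]
  linear_combination (2 * B x y - 2 * B y x) * Complex.I_mul_I

lemma ext_of_apply_self {B₁ B₂ : V →ₗ⋆[ℂ] V →ₗ[ℂ] ℂ} (h : ∀ x, B₁ x x = B₂ x x) :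
    B₁ = B₂ := by
  ext x y
  have h₁ := B₁.polarization x y
  have h₂ := B₂.polarization x y
  simp only [h] at h₁
  linear_combination (h₁ - h₂) / 4

namespace IsSymm

variable {B : V →ₗ⋆[ℂ] V →ₗ[ℂ] ℂ}

lemma ofReal_re_apply_self (hB : B.IsSymm) (x : V) : ((B x x).re : ℂ) = B x x :=
  Complex.conj_eq_iff_re.mp (hB.eq x x)

lemma apply_add_self_of_re_eq_zero (hB : B.IsSymm) {x y : V} (h : (B x y).re = 0) :
    B (x + y) (x + y) = B x x + B y y := by
  have : B x y + B y x = 0 := by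
    rw [← hB.eq x y, Complex.add_conj, h]
    simp
  simp only [map_add, add_apply]
  linear_combination this

lemma exists_null_pair (hB : B.IsSymm) {x y : V} (hx : 0 < (B x x).re) (hy : (B y y).re < 0) :
    ∃ (t : ℝ) (c : ℂ), conj c * c = 1 ∧ (t : ℂ) ^ 2 * B x x + B y y = 0 ∧
      B ((t : ℂ) • x + c • y) ((t : ℂ) • x + c • y) = 0 ∧
      B ((t : ℂ) • x - c • y) ((t : ℂ) • x - c • y) = 0 := by
  obtain ⟨c, hc, hre⟩ := Complex.exists_conj_mul_self_eq_one_and_re_mul_eq_zero (B x y)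
  set t := √(-(B y y).re / (B x x).re)
  have ht : (t : ℂ) ^ 2 * B x x + B y y = 0 := by
    rw [← hB.ofReal_re_apply_self x, ← hB.ofReal_re_apply_self y]
    have : t ^ 2 * (B x x).re = -(B y y).re := by
      rw [Real.sq_sqrt (div_nonneg (by linarith) hx.le)]
      field_simp
    exact_mod_cast (by linarith : t ^ 2 * (B x x).re + (B y y).re = 0)
  have hcross : ∀ d : ℂ, B ((t : ℂ) • x) (d • y) = t * (d * B x y) := by
    intro d
    simp only [map_smulₛₗ, smul_apply, smul_eq_mul, Complex.conj_ofReal, RingHom.id_apply]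
    ring
  have hnull : ∀ d : ℂ, conj d * d = 1 → (d * B x y).re = 0 →
      B ((t : ℂ) • x + d • y) ((t : ℂ) • x + d • y) = 0 := by
    intro d hd h
    rw [hB.apply_add_self_of_re_eq_zero (by rw [hcross, Complex.re_ofReal_mul, h, mul_zero]),
      apply_smul_self, apply_smul_self, hd, Complex.conj_ofReal]
    linear_combination ht
  refine ⟨t, c, hc, ht, hnull c hc hre, ?_⟩
  rw [sub_eq_add_neg, ← neg_smul]
  exact hnull (-c) (by simpa using hc) (by rw [neg_mul, Complex.neg_re, hre, neg_zero])

lemma apply_map_self_mul_apply_self_eq {W : Type*} [AddCommGroup W] [Module ℂ W]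
    (hB : B.IsSymm) (BW : W →ₗ⋆[ℂ] W →ₗ[ℂ] ℂ) {G : V →ₗ[ℂ] W}
    (hnull : ∀ x : V, B x x = 0 → BW (G x) (G x) = 0) {x y : V}
    (hx : 0 < (B x x).re) (hy : (B y y).re < 0) :
    BW (G x) (G x) * B y y = BW (G y) (G y) * B x x := by
  obtain ⟨t, c, hc, hV, hadd, hsub⟩ := hB.exists_null_pair hx hy
  have hW : (t : ℂ) ^ 2 * BW (G x) (G x) + BW (G y) (G y) = 0 := by
    have h := BW.apply_add_self_add_apply_sub_self (G ((t : ℂ) • x)) (G (c • y))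
    rw [← map_add, ← map_sub, hnull _ hadd, hnull _ hsub, G.map_smul, G.map_smul,
      apply_smul_self, apply_smul_self, hc, Complex.conj_ofReal] at h
    linear_combination -h / 2
  linear_combination BW (G x) (G x) * hV - B x x * hW

end IsSymm

end LinearMap

lemma exists_eq_mul_of_mul_eq_mul {α : Type*} {p q : α → ℝ} (hindef : ∃ u v, 0 < q u ∧ q v < 0)
    (hzero : ∀ x, q x = 0 → p x = 0)
    (hcross : ∀ x y, 0 < q x → q y < 0 → p x * q y = p y * q x) :
    ∃ lam : ℝ, ∀ x, p x = lam * q x := by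
  obtain ⟨u, v, hu, hv⟩ := hindef
  refine ⟨p v / q v, fun x => ?_⟩
  rw [div_mul_eq_mul_div, eq_div_iff hv.ne]
  rcases lt_trichotomy (q x) 0 with hx | hx | hx
  · apply mul_right_cancel₀ hu.ne'
    linear_combination q x * hcross u v hu hv - q v * hcross u x hu hx
  · simp [hx, hzero x hx]
  · exact hcross x v hx hv

theorem stmt_4_general (V W : Type*) [AddCommGroup V] [Module ℂ V] [AddCommGroup W] [Module ℂ W]
    (BV : V →ₗ⋆[ℂ] V →ₗ[ℂ] ℂ) (BW : W →ₗ⋆[ℂ] W →ₗ[ℂ] ℂ)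
    (hBV : ∀ x y : V, BV x y = starRingEnd ℂ (BV y x))
    (hBW : ∀ x y : W, BW x y = starRingEnd ℂ (BW y x))
    (hindef : ∃ u v : V, 0 < (BV u u).re ∧ (BV v v).re < 0)
    (G : V →ₗ[ℂ] W)
    (hnull : ∀ x : V, BV x x = 0 → BW (G x) (G x) = 0) :
    ∃ lam : ℝ, ∀ x y : V, BW (G x) (G y) = (lam : ℂ) * BV x y := by
  have hV : BV.IsSymm := ⟨fun x y => (hBV y x).symm⟩
  have hW : BW.IsSymm := ⟨fun x y => (hBW y x).symm⟩
  obtain ⟨lam, hlam⟩ := exists_eq_mul_of_mul_eq_mul (p := fun x => (BW (G x) (G x)).re)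
    (q := fun x => (BV x x).re) hindef
    (fun x hx => by simp [hnull x (by rw [← hV.ofReal_re_apply_self, hx, Complex.ofReal_zero])])
    (fun x y hx hy => by
      have h := congrArg Complex.re (hV.apply_map_self_mul_apply_self_eq BW hnull hx hy)
      rwa [← hV.ofReal_re_apply_self y, ← hV.ofReal_re_apply_self x, Complex.re_mul_ofReal,
        Complex.re_mul_ofReal] at h)
  have hdiag : ∀ x, (BW.comp G).compl₂ G x x = ((lam : ℂ) • BV) x x := fun x => by
    rw [LinearMap.compl₂_apply, LinearMap.comp_apply, LinearMap.smul_apply,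
      LinearMap.smul_apply, smul_eq_mul, ← hW.ofReal_re_apply_self, ← hV.ofReal_re_apply_self,
      hlam x, Complex.ofReal_mul]
  exact ⟨lam, LinearMap.congr_fun₂ (LinearMap.ext_of_apply_self hdiag)⟩

theorem stmt_4 (V W : Type*) [AddCommGroup V] [Module ℂ V] [AddCommGroup W] [Module ℂ W]
    [FiniteDimensional ℂ V] [FiniteDimensional ℂ W]
    (BV : V →ₗ⋆[ℂ] V →ₗ[ℂ] ℂ) (BW : W →ₗ⋆[ℂ] W →ₗ[ℂ] ℂ)
    (hBV : ∀ x y : V, BV x y = starRingEnd ℂ (BV y x))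
    (hBW : ∀ x y : W, BW x y = starRingEnd ℂ (BW y x))
    (hindef : ∃ u v : V, 0 < (BV u u).re ∧ (BV v v).re < 0)
    (G : V →ₗ[ℂ] W)
    (hnull : ∀ x : V, BV x x = 0 → BW (G x) (G x) = 0) :
    ∃ lam : ℝ, ∀ x y : V, BW (G x) (G y) = (lam : ℂ) * BV x y :=
  stmt_4_general V W BV BW hBV hBW hindef G hnull
end

section
/- Let V and W be complex vector spaces equipped with Hermitian sesquilinear forms ⟨·,·⟩_V and ⟨·,·⟩_W (possibly degenerate), and let G : V → W be a ℂ-linear map such that ⟨Gx,Gx⟩_W = 0 for every x ∈ V with ⟨x,x⟩_V = 0. Let v₊, v₋, v₀ ∈ V be pairwise orthogonal vectors (i.e., ⟨v₊,v₋⟩_V = ⟨v₊,v₀⟩_V = ⟨v₋,v₀⟩_V = 0) with ⟨v₊,v₊⟩_V = −⟨v₋,v₋⟩_V and ⟨v₀,v₀⟩_V = 0. Then ⟨Gv₊,Gv₋⟩_W = 0, ⟨Gv₊,Gv₀⟩_W = 0, ⟨Gv₋,Gv₀⟩_W = 0, and ⟨Gv₊,Gv₊⟩_W = −⟨Gv₋,Gv₋⟩_W.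 -/
theorem stmt_5 (V W : Type*) [AddCommGroup V] [Module ℂ V] [AddCommGroup W] [Module ℂ W]
    (BV : V →ₗ⋆[ℂ] V →ₗ[ℂ] ℂ) (BW : W →ₗ⋆[ℂ] W →ₗ[ℂ] ℂ)
    (hBV : ∀ x y : V, BV x y = starRingEnd ℂ (BV y x))
    (hBW : ∀ x y : W, BW x y = starRingEnd ℂ (BW y x))
    (G : V →ₗ[ℂ] W)
    (hnull : ∀ x : V, BV x x = 0 → BW (G x) (G x) = 0)
    (vp vm v0 : V)
    (hpm : BV vp vm = 0) (hp0 : BV vp v0 = 0) (hm0 : BV vm v0 = 0)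
    (hsq : BV vp vp = -BV vm vm) (h00 : BV v0 v0 = 0) :
    BW (G vp) (G vm) = 0 ∧ BW (G vp) (G v0) = 0 ∧ BW (G vm) (G v0) = 0 ∧
      BW (G vp) (G vp) = -BW (G vm) (G vm) := by
  have hmp : BV vm vp = 0 := by rw [hBV, hpm]; simp
  have h0p : BV v0 vp = 0 := by rw [hBV, hp0]; simp
  have h0m : BV v0 vm = 0 := by rw [hBV, hm0]; simp
  set a := BW (G vp) (G vp) with ha
  set b := BW (G vm) (G vm) with hb
  set c := BW (G v0) (G v0) with hc
  set p := BW (G vp) (G vm) with hp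
  set p' := BW (G vm) (G vp) with hp'
  set q := BW (G vp) (G v0) with hq
  set q' := BW (G v0) (G vp) with hq'
  set r := BW (G vm) (G v0) with hr
  set r' := BW (G v0) (G vm) with hr'
  have e0 : c = 0 := hnull v0 h00
  have key : ∀ α β : ℂ, starRingEnd ℂ α * α = 1 →
      a + b + starRingEnd ℂ β * β * c
      + α * p + starRingEnd ℂ α * p' + β * q + starRingEnd ℂ β * q'
      + starRingEnd ℂ α * β * r + α * starRingEnd ℂ β * r' = 0 := by
    intro α β hα
    have hx : BV (vp + α • vm + β • v0) (vp + α • vm + β • v0) = 0 := by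
      simp only [map_add, map_smul, map_smulₛₗ, LinearMap.add_apply, LinearMap.smul_apply,
        smul_eq_mul, RingHom.id_apply, hpm, hp0, hm0, hmp, h0p, h0m, hsq, h00]
      linear_combination BV vm vm * hα
    have e := hnull _ hx
    simp only [map_add, map_smul, map_smulₛₗ, LinearMap.add_apply, LinearMap.smul_apply,
      smul_eq_mul, RingHom.id_apply, ← ha, ← hb, ← hc, ← hp, ← hp', ← hq, ← hq', ← hr,
      ← hr'] at e
    linear_combination e - b * hα
  have h1 : (starRingEnd ℂ) (1:ℂ) * 1 = 1 := by simp
  have h2 : (starRingEnd ℂ) (-1:ℂ) * (-1) = 1 := by simp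
  have h3 : (starRingEnd ℂ) Complex.I * Complex.I = 1 := by
    simp [Complex.conj_I, Complex.I_mul_I]
  have e1 := key 1 0 h1
  have e2 := key (-1) 0 h2
  have e3 := key Complex.I 0 h3
  have e4 := key 1 1 h1
  have e5 := key (-1) 1 h2
  have e6 := key 1 Complex.I h1
  have e7 := key (-1) Complex.I h2
  simp only [map_one, map_neg, map_zero, Complex.conj_I, one_mul, mul_one, neg_mul, mul_neg,
    neg_neg, zero_mul, mul_zero, add_zero, e0, Complex.I_mul_I] at e1 e2 e3 e4 e5 e6 e7
  refine ⟨?_, ?_, ?_, ?_⟩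
  · linear_combination (1/4 + Complex.I/4) * e1 + (-1/4 + Complex.I/4) * e2
      - (Complex.I/2) * e3 + ((p - p')/2) * Complex.I_sq
  · linear_combination (e4 + e5)/4 - Complex.I * (e6 + e7)/4
      + (-1/2 + Complex.I/2) * (e1 + e2)/2 + ((q - q')/2) * Complex.I_sq
  · linear_combination (e4 - e5)/4 - Complex.I * (e6 - e7)/4
      + (-1/4 + Complex.I/4) * (e1 - e2) + ((r - r')/2) * Complex.I_sq
  · linear_combination (e1 + e2)/2
end

section
/- Let n, r, s be integers with r ≥ 1, s ≥ 1 and r + s ≤ n. Let A₁ be a complex (r+1)×s matrix and A₂ a complex (n−r−s)×s matrix. Then the following are equivalent: (i) for every row vector v¹ ∈ ℂ^{r+1} and every row vector v³ ∈ ℂ^{n−r−s}, one has ‖v¹‖² ≥ ‖v¹·A₁ + v³·A₂‖² (norms being the standard Hermitian norms); (ii) A₂ = 0 and I_{r+1} − A₁·A₁* is positive semidefinite. -/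
open Matrix
open scoped ComplexOrder

/-! The quadratic form of `1 - A * Aᴴ` at `x` is `‖x‖² - ‖xᴴ A‖²`, so `v ↦ v A` is a contraction
exactly when `1 - A * Aᴴ` is positive semidefinite. Taking `v¹ = 0` in (i) forces `v³ A₂ = 0` for
every `v³`, i.e. `A₂ = 0`, after which (i) is the contraction property of `A₁`. -/

namespace Matrix

variable {𝕜 E : Type*} [RCLike 𝕜] [NormedAddCommGroup E] {l m n : Type*} [Fintype l] [Fintype m]
  [Fintype n]

lemma sum_norm_sq_nonpos_iff (x : m → E) : ∑ i, ‖x i‖ ^ 2 ≤ 0 ↔ x = 0 := by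
  have hsq : 0 ≤ fun i ↦ ‖x i‖ ^ 2 := fun i ↦ by positivity
  rw [(Finset.sum_nonneg fun i _ ↦ hsq i).ge_iff_eq', Fintype.sum_eq_zero_iff_of_nonneg hsq]
  simp [funext_iff]

lemma ofReal_sum_norm_sq (x : m → 𝕜) : ((∑ i, ‖x i‖ ^ 2 : ℝ) : 𝕜) = star x ⬝ᵥ x := by
  simp [dotProduct, RCLike.conj_mul]

lemma ofReal_sum_norm_sq_vecMul (A : Matrix m n 𝕜) (x : m → 𝕜) :
    ((∑ j, ‖(star x ᵥ* A) j‖ ^ 2 : ℝ) : 𝕜) = star x ⬝ᵥ (A * Aᴴ) *ᵥ x := by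
  rw [ofReal_sum_norm_sq, star_vecMul, star_star, ← mulVec_mulVec, dotProduct_mulVec,
    dotProduct_comm]

lemma ofReal_sum_norm_sq_sub_sum_norm_sq_vecMul [DecidableEq m] (A : Matrix m n 𝕜) (x : m → 𝕜) :
    ((∑ i, ‖x i‖ ^ 2 - ∑ j, ‖(star x ᵥ* A) j‖ ^ 2 : ℝ) : 𝕜) = star x ⬝ᵥ (1 - A * Aᴴ) *ᵥ x := by
  rw [RCLike.ofReal_sub, ofReal_sum_norm_sq, ofReal_sum_norm_sq_vecMul, sub_mulVec, one_mulVec,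
    dotProduct_sub]

theorem forall_sum_norm_sq_vecMul_le_iff_posSemidef [DecidableEq m] (A : Matrix m n 𝕜) :
    (∀ v : m → 𝕜, ∑ j, ‖(v ᵥ* A) j‖ ^ 2 ≤ ∑ i, ‖v i‖ ^ 2) ↔ (1 - A * Aᴴ).PosSemidef := by
  simp only [posSemidef_iff_dotProduct_mulVec, isHermitian_one.sub
    (isHermitian_mul_conjTranspose_self A), true_and,
    ← ofReal_sum_norm_sq_sub_sum_norm_sq_vecMul, RCLike.ofReal_nonneg, sub_nonneg]
  refine star_involutive.surjective.forall.trans ?_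
  simp only [Pi.star_apply, norm_star]

theorem forall_sum_norm_sq_vecMul_add_le_iff (A : Matrix l n 𝕜) (B : Matrix m n 𝕜) :
    (∀ v w, ∑ j, ‖(v ᵥ* A + w ᵥ* B) j‖ ^ 2 ≤ ∑ i, ‖v i‖ ^ 2) ↔
      B = 0 ∧ ∀ v, ∑ j, ‖(v ᵥ* A) j‖ ^ 2 ≤ ∑ i, ‖v i‖ ^ 2 := by
  refine ⟨fun h ↦ ?_, ?_⟩
  · have hB : B = 0 := ext_iff_vecMul.2 fun w ↦ by
      simpa [sum_norm_sq_nonpos_iff] using h 0 w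
    exact ⟨hB, fun v ↦ by simpa [hB] using h v 0⟩
  · rintro ⟨rfl, h⟩ v w
    simpa using h v

end Matrix

theorem stmt_8_general (n r s : ℕ)
    (A₁ : Matrix (Fin (r + 1)) (Fin s) ℂ) (A₂ : Matrix (Fin (n - r - s)) (Fin s) ℂ) :
    (∀ (v1 : Fin (r + 1) → ℂ) (v3 : Fin (n - r - s) → ℂ),
        (∑ j : Fin s, ‖(Matrix.vecMul v1 A₁ + Matrix.vecMul v3 A₂) j‖ ^ 2) ≤
          ∑ i : Fin (r + 1), ‖v1 i‖ ^ 2) ↔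
      (A₂ = 0 ∧ ((1 : Matrix (Fin (r + 1)) (Fin (r + 1)) ℂ) - A₁ * A₁ᴴ).PosSemidef) := by
  rw [forall_sum_norm_sq_vecMul_add_le_iff, forall_sum_norm_sq_vecMul_le_iff_posSemidef]

theorem stmt_8 (n r s : ℕ) (hr : 1 ≤ r) (hs : 1 ≤ s) (hrsn : r + s ≤ n)
    (A₁ : Matrix (Fin (r + 1)) (Fin s) ℂ) (A₂ : Matrix (Fin (n - r - s)) (Fin s) ℂ) :
    (∀ (v1 : Fin (r + 1) → ℂ) (v3 : Fin (n - r - s) → ℂ),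
        (∑ j : Fin s, ‖(Matrix.vecMul v1 A₁ + Matrix.vecMul v3 A₂) j‖ ^ 2) ≤
          ∑ i : Fin (r + 1), ‖v1 i‖ ^ 2) ↔
      (A₂ = 0 ∧ ((1 : Matrix (Fin (r + 1)) (Fin (r + 1)) ℂ) - A₁ * A₁ᴴ).PosSemidef) :=
  stmt_8_general n r s A₁ A₂
end

section
/- Let n, r, s be integers with r ≥ 0, s ≥ 0 and r + s ≤ n. Let W ⊆ ℂ^{n+1} be a complex linear subspace such that every nonzero w = (w₀, …, w_n) ∈ W satisfies ∑_{i=0}^{r} |w_i|² > ∑_{j=r+1}^{r+s} |w_j|². Then the linear projection w ↦ (w₀, …, w_r) is injective on W; in particular dim_ℂ W ≤ r + 1. Moreover, if dim_ℂ W = r + 1, then there exist unique matrices A₁ ∈ M_{(r+1)×s}(ℂ) with I_{r+1} − A₁·A₁* positive definite and A₂ ∈ M_{(r+1)×(n−r−s)}(ℂ) such that W = {(z, z·A₁, z·A₂) : z ∈ ℂ^{r+1}}. -/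
open Matrix
open scoped ComplexOrder

/-- The vector `(z, z·A₁, z·A₂) ∈ ℂ^{n+1}`, where `z ∈ ℂ^{r+1}`,
`A₁` is a complex `(r+1)×s` matrix and `A₂` is a complex `(r+1)×(n-r-s)` matrix. -/
noncomputable def genBallGraphVec (n r s : ℕ) (A₁ : Matrix (Fin (r + 1)) (Fin s) ℂ)
    (A₂ : Matrix (Fin (r + 1)) (Fin (n - r - s)) ℂ) (z : Fin (r + 1) → ℂ) :
    Fin (n + 1) → ℂ :=
  fun i =>
    if h1 : (i : ℕ) ≤ r then z ⟨(i : ℕ), by omega⟩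
    else if h2 : (i : ℕ) ≤ r + s then Matrix.vecMul z A₁ ⟨(i : ℕ) - (r + 1), by omega⟩
    else Matrix.vecMul z A₂ ⟨(i : ℕ) - (r + s + 1), by have := i.isLt; omega⟩

/-!
A vector of `W` whose head `(w₀, …, w_r)` vanishes satisfies `∑_{middle} |w_j|² < 0`, so it is
zero: the head projection is injective on `W`, whence `dim W ≤ r + 1`. If equality holds, the
projection is an isomorphism `W ≃ ℂ^{r+1}`, and the matrix of its inverse exhibits `W` as the
graph `{(z, z A₁, z A₂)}`. On such a graph vector the defining inequality reads
`‖z A₁‖² < ‖z‖²`, which is positive definiteness of `I - A₁ A₁*` (tested on `z = x*`).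
Uniqueness holds because the head of `(z, z A₁, z A₂)` recovers `z`.
-/

lemma star_dotProduct_self_eq_sum_norm_sq {ι : Type*} [Fintype ι] (v : ι → ℂ) :
    star v ⬝ᵥ v = ((∑ i, ‖v i‖ ^ 2 : ℝ) : ℂ) := by
  push_cast
  exact Finset.sum_congr rfl fun i _ => RCLike.conj_mul (v i)

lemma Matrix.posDef_one_sub_mul_conjTranspose {m ι : Type*} [Fintype m] [DecidableEq m]
    [Fintype ι] {A : Matrix m ι ℂ}
    (hA : ∀ z : m → ℂ, z ≠ 0 → ∑ j, ‖(z ᵥ* A) j‖ ^ 2 < ∑ k, ‖z k‖ ^ 2) :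
    (1 - A * Aᴴ).PosDef := by
  refine posDef_iff_dotProduct_mulVec.2
    ⟨isHermitian_one.sub (isHermitian_mul_conjTranspose_self A), fun x hx => ?_⟩
  have hAx : star x ᵥ* A = star (Aᴴ *ᵥ x) := by
    rw [star_mulVec, conjTranspose_conjTranspose]
  have hquad : star x ⬝ᵥ ((1 - A * Aᴴ) *ᵥ x) = star x ⬝ᵥ x - star (Aᴴ *ᵥ x) ⬝ᵥ (Aᴴ *ᵥ x) := by
    rw [sub_mulVec, one_mulVec, dotProduct_sub, ← mulVec_mulVec, dotProduct_mulVec, hAx]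
  have hlt := hA (star x) (star_ne_zero.2 hx)
  simp only [hAx, Pi.star_apply, norm_star] at hlt
  rw [hquad, star_dotProduct_self_eq_sum_norm_sq, star_dotProduct_self_eq_sum_norm_sq,
    ← Complex.ofReal_sub, Complex.zero_lt_real]
  linarith

namespace GenBall

variable {n r s : ℕ}

def headIdx (h : r + s ≤ n) (k : Fin (r + 1)) : Fin (n + 1) := ⟨k, by omega⟩

def midIdx (h : r + s ≤ n) (j : Fin s) : Fin (n + 1) := ⟨r + 1 + j, by omega⟩

def tailIdx (r s : ℕ) (j : Fin (n - r - s)) : Fin (n + 1) := ⟨r + s + 1 + j, by omega⟩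

lemma funext_of_comp_idx {α : Type*} (h : r + s ≤ n) {v w : Fin (n + 1) → α}
    (hhead : v ∘ headIdx h = w ∘ headIdx h) (hmid : v ∘ midIdx h = w ∘ midIdx h)
    (htail : v ∘ tailIdx r s = w ∘ tailIdx r s) : v = w := by
  funext ⟨i, hi⟩
  by_cases h1 : i ≤ r
  · exact congrFun hhead ⟨i, by omega⟩
  by_cases h2 : i ≤ r + s
  · obtain ⟨j, rfl⟩ : ∃ j, i = r + 1 + j := ⟨i - (r + 1), by omega⟩
    exact congrFun hmid ⟨j, by omega⟩
  · obtain ⟨j, rfl⟩ : ∃ j, i = r + s + 1 + j := ⟨i - (r + s + 1), by omega⟩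
    exact congrFun htail ⟨j, by omega⟩

lemma sum_ite_le_eq {M : Type*} [AddCommMonoid M] (h : r + s ≤ n) (f : Fin (n + 1) → M) :
    (∑ i : Fin (n + 1), if (i : ℕ) ≤ r then f i else 0) = ∑ k, f (headIdx h k) := by
  symm
  refine Finset.sum_of_injOn (headIdx h) (fun a _ b _ hab => ?_) (fun _ _ => Finset.mem_univ _)
    (fun i _ hi => if_neg fun hir => ?_) (fun k _ => (if_pos ?_).symm)
  · simpa [headIdx, Fin.ext_iff] using hab
  · exact hi ⟨⟨i, by omega⟩, Finset.mem_coe.2 (Finset.mem_univ _), rfl⟩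
  · exact Nat.lt_succ_iff.1 k.isLt

lemma sum_ite_mid_eq {M : Type*} [AddCommMonoid M] (h : r + s ≤ n) (f : Fin (n + 1) → M) :
    (∑ i : Fin (n + 1), if r < (i : ℕ) ∧ (i : ℕ) ≤ r + s then f i else 0) =
      ∑ j, f (midIdx h j) := by
  symm
  refine Finset.sum_of_injOn (midIdx h) (fun a _ b _ hab => ?_) (fun _ _ => Finset.mem_univ _)
    (fun i _ hi => if_neg fun hi' => ?_) (fun j _ => (if_pos ?_).symm)
  · simpa [midIdx, Fin.ext_iff] using hab
  · obtain ⟨hri, his⟩ := hi'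
    exact hi ⟨⟨i - (r + 1), by omega⟩, Finset.mem_coe.2 (Finset.mem_univ _),
      Fin.ext (by simp only [midIdx]; omega)⟩
  · simp only [midIdx]; omega

lemma disjoint_ker_funLeft_headIdx (h : r + s ≤ n) {W : Submodule ℂ (Fin (n + 1) → ℂ)}
    (hW : ∀ w ∈ W, w ≠ 0 → ∑ j, ‖w (midIdx h j)‖ ^ 2 < ∑ k, ‖w (headIdx h k)‖ ^ 2) :
    Disjoint W (LinearMap.ker (LinearMap.funLeft ℂ ℂ (headIdx h))) := by
  refine LinearMap.disjoint_ker.2 fun w hw hw0 => by_contra fun hne => ?_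
  have hhead : ∀ k, w (headIdx h k) = 0 := congrFun hw0
  have hlt := hW w hw hne
  simp only [hhead, norm_zero, ne_eq, OfNat.ofNat_ne_zero, not_false_eq_true, zero_pow,
    Finset.sum_const_zero] at hlt
  exact hlt.not_ge (by positivity)

variable {A₁ : Matrix (Fin (r + 1)) (Fin s) ℂ} {A₂ : Matrix (Fin (r + 1)) (Fin (n - r - s)) ℂ}
  {z : Fin (r + 1) → ℂ}

@[simp]
lemma genBallGraphVec_comp_headIdx (h : r + s ≤ n) :
    genBallGraphVec n r s A₁ A₂ z ∘ headIdx h = z :=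
  funext fun k => dif_pos (Nat.lt_succ_iff.1 k.isLt)

@[simp]
lemma genBallGraphVec_comp_midIdx (h : r + s ≤ n) :
    genBallGraphVec n r s A₁ A₂ z ∘ midIdx h = z ᵥ* A₁ := by
  funext j
  have h1 : ¬ r + 1 + (j : ℕ) ≤ r := by omega
  have h2 : r + 1 + (j : ℕ) ≤ r + s := by omega
  simp [genBallGraphVec, midIdx, h1, h2]

@[simp]
lemma genBallGraphVec_comp_tailIdx :
    genBallGraphVec n r s A₁ A₂ z ∘ tailIdx r s = z ᵥ* A₂ := by
  funext j
  have h1 : ¬ r + s + 1 + (j : ℕ) ≤ r := by omega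
  have h2 : ¬ r + s + 1 + (j : ℕ) ≤ r + s := by omega
  simp [genBallGraphVec, tailIdx, h1, h2]

@[simp]
lemma genBallGraphVec_headIdx (h : r + s ≤ n) (k : Fin (r + 1)) :
    genBallGraphVec n r s A₁ A₂ z (headIdx h k) = z k :=
  congrFun (genBallGraphVec_comp_headIdx h) k

@[simp]
lemma genBallGraphVec_midIdx (h : r + s ≤ n) (j : Fin s) :
    genBallGraphVec n r s A₁ A₂ z (midIdx h j) = (z ᵥ* A₁) j :=
  congrFun (genBallGraphVec_comp_midIdx h) j

lemma eq_genBallGraphVec_iff (h : r + s ≤ n) {w : Fin (n + 1) → ℂ} :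
    w = genBallGraphVec n r s A₁ A₂ z ↔
      w ∘ headIdx h = z ∧ w ∘ midIdx h = z ᵥ* A₁ ∧ w ∘ tailIdx r s = z ᵥ* A₂ := by
  refine ⟨?_, fun ⟨hhead, hmid, htail⟩ => funext_of_comp_idx h ?_ ?_ ?_⟩
  · rintro rfl
    simp
  all_goals simpa

lemma exists_forall_eq_genBallGraphVec (h : r + s ≤ n)
    (L : (Fin (r + 1) → ℂ) →ₗ[ℂ] Fin (n + 1) → ℂ) (hL : ∀ z, L z ∘ headIdx h = z) :
    ∃ p : Matrix (Fin (r + 1)) (Fin s) ℂ × Matrix (Fin (r + 1)) (Fin (n - r - s)) ℂ,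
      ∀ z, L z = genBallGraphVec n r s p.1 p.2 z := by
  set M := LinearMap.toMatrix' L
  refine ⟨((M.submatrix (midIdx h) id)ᵀ, (M.submatrix (tailIdx r s) id)ᵀ), fun z => ?_⟩
  have hLz : L z = M *ᵥ z := by rw [← Matrix.toLin'_apply, Matrix.toLin'_toMatrix']
  rw [eq_genBallGraphVec_iff h, vecMul_transpose, vecMul_transpose]
  exact ⟨hL z, by rw [hLz]; rfl, by rw [hLz]; rfl⟩

lemma exists_coe_eq_setOf_genBallGraphVec (h : r + s ≤ n) {W : Submodule ℂ (Fin (n + 1) → ℂ)}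
    (hW : Disjoint W (LinearMap.ker (LinearMap.funLeft ℂ ℂ (headIdx h))))
    (hdim : Module.finrank ℂ W = r + 1) :
    ∃ p : Matrix (Fin (r + 1)) (Fin s) ℂ × Matrix (Fin (r + 1)) (Fin (n - r - s)) ℂ,
      (W : Set (Fin (n + 1) → ℂ)) = {w | ∃ z, w = genBallGraphVec n r s p.1 p.2 z} := by
  set head := (LinearMap.funLeft ℂ ℂ (headIdx h)).domRestrict W
  have hinj : Function.Injective head := LinearMap.injective_domRestrict_iff.2 hW
  have hsurj : Function.Surjective head :=
    (LinearMap.injective_iff_surjective_of_finrank_eq_finrank (by simp [hdim])).1 hinj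
  let e := LinearEquiv.ofBijective head ⟨hinj, hsurj⟩
  obtain ⟨p, hp⟩ := exists_forall_eq_genBallGraphVec h
    (W.subtype ∘ₗ e.symm.toLinearMap) (fun z => e.apply_symm_apply z)
  refine ⟨p, Set.ext fun w => ⟨fun hw => ⟨e ⟨w, hw⟩, ?_⟩, ?_⟩⟩
  · rw [← hp]
    simp
  · rintro ⟨z, rfl⟩
    rw [← hp]
    exact (e.symm z).2

lemma posDef_one_sub_of_coe_eq_setOf_genBallGraphVec (h : r + s ≤ n)
    {W : Submodule ℂ (Fin (n + 1) → ℂ)}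
    (hW : ∀ w ∈ W, w ≠ 0 → ∑ j, ‖w (midIdx h j)‖ ^ 2 < ∑ k, ‖w (headIdx h k)‖ ^ 2)
    (hgraph : (W : Set (Fin (n + 1) → ℂ)) = {w | ∃ z, w = genBallGraphVec n r s A₁ A₂ z}) :
    (1 - A₁ * A₁ᴴ).PosDef := by
  refine Matrix.posDef_one_sub_mul_conjTranspose fun z hz => ?_
  have hmem : genBallGraphVec n r s A₁ A₂ z ∈ W := (Set.ext_iff.1 hgraph _).2 ⟨z, rfl⟩
  have hne : genBallGraphVec n r s A₁ A₂ z ≠ 0 := fun h0 =>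
    hz (by simpa using congrArg (· ∘ headIdx h) h0)
  simpa using hW _ hmem hne

lemma eq_of_setOf_genBallGraphVec_eq (h : r + s ≤ n) {B₁ : Matrix (Fin (r + 1)) (Fin s) ℂ}
    {B₂ : Matrix (Fin (r + 1)) (Fin (n - r - s)) ℂ}
    (hAB : {w | ∃ z, w = genBallGraphVec n r s A₁ A₂ z} =
      {w | ∃ z, w = genBallGraphVec n r s B₁ B₂ z}) :
    A₁ = B₁ ∧ A₂ = B₂ := by
  have hgraph : ∀ z, genBallGraphVec n r s A₁ A₂ z = genBallGraphVec n r s B₁ B₂ z := by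
    intro z
    obtain ⟨z', hz'⟩ : genBallGraphVec n r s A₁ A₂ z ∈
        {w | ∃ z, w = genBallGraphVec n r s B₁ B₂ z} := hAB ▸ ⟨z, rfl⟩
    obtain rfl : z = z' := by simpa using congrArg (· ∘ headIdx h) hz'
    exact hz'
  refine ⟨ext_iff_vecMul.2 fun z => ?_, ext_iff_vecMul.2 fun z => ?_⟩
  · simpa using congrArg (· ∘ midIdx h) (hgraph z)
  · simpa using congrArg (· ∘ tailIdx r s) (hgraph z)

end GenBall

theorem stmt_13 (n r s : ℕ) (hrsn : r + s ≤ n)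
    (W : Submodule ℂ (Fin (n + 1) → ℂ))
    (hW : ∀ w ∈ W, w ≠ 0 →
      (∑ i : Fin (n + 1), if r < (i : ℕ) ∧ (i : ℕ) ≤ r + s then ‖w i‖ ^ 2 else 0) <
        ∑ i : Fin (n + 1), if (i : ℕ) ≤ r then ‖w i‖ ^ 2 else 0) :
    Set.InjOn
      (fun w : Fin (n + 1) → ℂ => fun i : Fin (r + 1) =>
        w ⟨(i : ℕ), by have := i.isLt; omega⟩) W ∧
    Module.finrank ℂ W ≤ r + 1 ∧
    (Module.finrank ℂ W = r + 1 →
      ∃! p : Matrix (Fin (r + 1)) (Fin s) ℂ × Matrix (Fin (r + 1)) (Fin (n - r - s)) ℂ,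
        ((1 : Matrix (Fin (r + 1)) (Fin (r + 1)) ℂ) - p.1 * p.1ᴴ).PosDef ∧
        (W : Set (Fin (n + 1) → ℂ)) =
          {w | ∃ z : Fin (r + 1) → ℂ, w = genBallGraphVec n r s p.1 p.2 z}) := by
  have hball : ∀ w ∈ W, w ≠ 0 →
      ∑ j, ‖w (GenBall.midIdx hrsn j)‖ ^ 2 < ∑ k, ‖w (GenBall.headIdx hrsn k)‖ ^ 2 := by
    simpa only [GenBall.sum_ite_le_eq hrsn, GenBall.sum_ite_mid_eq hrsn] using hW
  have hdisj := GenBall.disjoint_ker_funLeft_headIdx hrsn hball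
  have hrank : Module.finrank ℂ W ≤ r + 1 := by
    simpa using LinearMap.finrank_le_finrank_of_injective
      (LinearMap.injective_domRestrict_iff.2 hdisj)
  refine ⟨LinearMap.disjoint_ker_iff_injOn.1 hdisj, hrank, fun hdim => ?_⟩
  obtain ⟨p, hp⟩ := GenBall.exists_coe_eq_setOf_genBallGraphVec hrsn hdisj hdim
  refine ⟨p, ⟨GenBall.posDef_one_sub_of_coe_eq_setOf_genBallGraphVec hrsn hball hp, hp⟩, ?_⟩
  rintro q ⟨-, hq⟩
  exact Prod.ext_iff.2 (GenBall.eq_of_setOf_genBallGraphVec_eq hrsn (hq.symm.trans hp))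
end
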